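/- arXiv:1907.06934 — 6 statements merged into one kernel-verified Lean document; each statement's English description precedes it below -/
import Mathlib

section
/- A permutation π ∈ S_n is monotone (i.e., for each i, either π(j) < π(i) for all j < i, or π(j) > π(i) for all j < i) and starts at k (π(1) = k) if and only if it is obtained by the following construction: choose a set D ⊆ {2,…,n} with |D| = k−1, place the numbers 1,…,k−1 in the positions of D in decreasing order, and place the numbers k+1,…,n in the remaining positions of {2,…,n} in increasing order. This gives a bijection between the set M_n^k of monotone permutations starting at k and the set of (k−1)-element subsets of {2,…,n}. -/
/-- A permutation `π` of `Fin n` (thought of as 1-based `S_n`) is *monotone* if for each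
position `i`, either all earlier values are smaller, or all earlier values are larger. -/
def IsMonotonePerm {n : ℕ} (π : Equiv.Perm (Fin n)) : Prop :=
  ∀ i : Fin n, (∀ j : Fin n, j < i → π j < π i) ∨ (∀ j : Fin n, j < i → π i < π j)

/-- A (0-based) position `i` is a *drop* of `π` if `i ≥ 1` (1-based `i ≥ 2`) and all earlier
values are larger than `π i`. -/
def IsDrop {n : ℕ} (π : Equiv.Perm (Fin n)) (i : Fin n) : Prop :=
  0 < i.val ∧ ∀ j : Fin n, j < i → π i < π j

/-- The set of drops of `π`. -/
def dropSet {n : ℕ} (π : Equiv.Perm (Fin n)) : Finset (Fin n) :=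
  Finset.univ.filter (fun i : Fin n => 0 < i.val ∧ ∀ j : Fin n, j < i → π i < π j)

/-! For a monotone `π` with `π 0 = k`, a position `i > 0` is a drop exactly when `π i < k`.
So the drops carry the values below `k` in decreasing order and the other positions carry the
values `≥ k` in increasing order. A strictly monotone map on a finite linear order is determined
by its image, hence `π` is determined by its drop set. Conversely, for `D` of size `k` avoiding
`0`, gluing the decreasing bijection `D ≃ [0, k)` with the increasing bijection `Dᶜ ≃ [k, n)`
gives a monotone permutation starting at `k` whose drop set is `D`. -/

section

open Set

theorem StrictMonoOn.eqOn_of_image_eq {α β : Type*} [LinearOrder α] [WellFoundedLT α]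
    [Preorder β] {f g : α → β} {s : Set α} (hf : StrictMonoOn f s) (hg : StrictMonoOn g s)
    (h : f '' s = g '' s) : s.EqOn f g := by
  rw [image_eq_range, image_eq_range] at h
  have hfg :=
    ((strictMonoOn_iff_strictMono.1 hf).range_inj (strictMonoOn_iff_strictMono.1 hg)).1 h
  exact fun x hx => congrFun hfg ⟨x, hx⟩

theorem StrictAntiOn.eqOn_of_image_eq {α β : Type*} [LinearOrder α] [WellFoundedLT α]
    [Preorder β] {f g : α → β} {s : Set α} (hf : StrictAntiOn f s) (hg : StrictAntiOn g s)
    (h : f '' s = g '' s) : s.EqOn f g :=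
  fun _ hx => OrderDual.toDual.injective <|
    StrictMonoOn.eqOn_of_image_eq (f := OrderDual.toDual ∘ f) (g := OrderDual.toDual ∘ g)
      hf.dual_right hg.dual_right (by rw [image_comp, image_comp, h]) hx

noncomputable def Fintype.orderIsoOfCardEq (α β : Type*) [LinearOrder α] [Fintype α]
    [LinearOrder β] [Fintype β] (h : Fintype.card α = Fintype.card β) : α ≃o β :=
  (Fintype.orderIsoFinOfCardEq α rfl).symm.trans (Fintype.orderIsoFinOfCardEq β h.symm)

theorem Fin.card_subtype_lt {n : ℕ} (k : Fin n) : Fintype.card {v : Fin n // v < k} = k := by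
  rw [Fintype.card_subtype, Finset.filter_gt_eq_Iio, Fin.card_Iio]

theorem Equiv.subtypeCongr_apply_of_pos {α : Type*} {p q : α → Prop} [DecidablePred p]
    [DecidablePred q] (e : {x // p x} ≃ {x // q x}) (f : {x // ¬p x} ≃ {x // ¬q x}) {a : α}
    (h : p a) : e.subtypeCongr f a = e ⟨a, h⟩ := by
  simp [Equiv.subtypeCongr, h]

theorem Equiv.subtypeCongr_apply_of_neg {α : Type*} {p q : α → Prop} [DecidablePred p]
    [DecidablePred q] (e : {x // p x} ≃ {x // q x}) (f : {x // ¬p x} ≃ {x // ¬q x}) {a : α}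
    (h : ¬p a) : e.subtypeCongr f a = f ⟨a, h⟩ := by
  simp [Equiv.subtypeCongr, h]

variable {n : ℕ} {π σ : Equiv.Perm (Fin n)} {k i j : Fin n}

theorem val_pos_of_apply_ne (h0 : π ⟨0, k.pos⟩ = k) (h : π i ≠ k) : 0 < i.val :=
  Nat.pos_of_ne_zero fun hi => h (by rwa [show i = ⟨0, k.pos⟩ from Fin.ext hi])

theorem mem_dropSet_iff : i ∈ dropSet π ↔ IsDrop π i := by
  simp [dropSet, IsDrop]

theorem zero_notMem_dropSet (π : Equiv.Perm (Fin n)) (hn : 0 < n) : ⟨0, hn⟩ ∉ dropSet π :=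
  fun h => lt_irrefl 0 (mem_dropSet_iff.1 h).1

theorem strictAntiOn_dropSet (π : Equiv.Perm (Fin n)) : StrictAntiOn π (dropSet π) :=
  fun i _ _ hj hij => (mem_dropSet_iff.1 hj).2 i hij

theorem isMonotonePerm_of_strictAntiOn_of_strictMonoOn (k : Fin n)
    (hanti : StrictAntiOn π (π ⁻¹' Iio k)) (hmono : StrictMonoOn π (π ⁻¹' Ici k)) :
    IsMonotonePerm π := by
  intro i
  rcases lt_or_ge (π i) k with hi | hi
  · refine Or.inr fun j hji => ?_
    rcases lt_or_ge (π j) k with hj | hj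
    · exact hanti hj hi hji
    · exact hi.trans_le hj
  · refine Or.inl fun j hji => ?_
    rcases lt_or_ge (π j) k with hj | hj
    · exact hj.trans_le hi
    · exact hmono hj hi hji

namespace IsMonotonePerm

theorem lt_of_not_isDrop (hπ : IsMonotonePerm π) (hij : i < j) (hj : ¬IsDrop π j) :
    π i < π j :=
  (hπ j).elim (fun h => h i hij) fun h => absurd ⟨i.val.zero_le.trans_lt hij, h⟩ hj

theorem lt_apply_of_not_isDrop (hπ : IsMonotonePerm π) (h0 : π ⟨0, k.pos⟩ = k)
    (hi : 0 < i.val) (hnd : ¬IsDrop π i) : k < π i :=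
  h0 ▸ hπ.lt_of_not_isDrop hi hnd

theorem isDrop_iff (hπ : IsMonotonePerm π) (h0 : π ⟨0, k.pos⟩ = k) :
    IsDrop π i ↔ π i < k :=
  ⟨fun ⟨hi, hdrop⟩ => h0 ▸ hdrop ⟨0, k.pos⟩ hi, fun hlt => by_contra fun hnd =>
    lt_asymm hlt (hπ.lt_apply_of_not_isDrop h0 (val_pos_of_apply_ne h0 hlt.ne) hnd)⟩

theorem coe_dropSet (hπ : IsMonotonePerm π) (h0 : π ⟨0, k.pos⟩ = k) :
    (dropSet π : Set (Fin n)) = π ⁻¹' Iio k := by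
  ext i
  exact mem_dropSet_iff.trans (hπ.isDrop_iff h0)

theorem card_dropSet (hπ : IsMonotonePerm π) (h0 : π ⟨0, k.pos⟩ = k) :
    (dropSet π).card = k.val := by
  have hmap : dropSet π = (Finset.Iio k).map π.symm.toEmbedding := by
    apply Finset.coe_injective
    rw [hπ.coe_dropSet h0, Finset.coe_map, Finset.coe_Iio, Equiv.coe_toEmbedding,
      Equiv.image_symm_eq_preimage]
  rw [hmap, Finset.card_map, Fin.card_Iio]

theorem image_dropSet (hπ : IsMonotonePerm π) (h0 : π ⟨0, k.pos⟩ = k) :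
    π '' dropSet π = Iio k := by
  rw [hπ.coe_dropSet h0, Equiv.image_preimage]

theorem image_compl_dropSet (hπ : IsMonotonePerm π) (h0 : π ⟨0, k.pos⟩ = k) :
    π '' (dropSet π : Set (Fin n))ᶜ = Ici k := by
  rw [hπ.coe_dropSet h0, ← preimage_compl, Equiv.image_preimage, compl_Iio]

theorem strictMonoOn_compl_dropSet (hπ : IsMonotonePerm π) :
    StrictMonoOn π (dropSet π : Set (Fin n))ᶜ :=
  fun _ _ _ hj hij => hπ.lt_of_not_isDrop hij (mt mem_dropSet_iff.2 hj)

theorem eq_of_dropSet_eq (hπ : IsMonotonePerm π) (h0 : π ⟨0, k.pos⟩ = k)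
    (hσ : IsMonotonePerm σ) (h0' : σ ⟨0, k.pos⟩ = k) (h : dropSet π = dropSet σ) :
    π = σ := by
  refine Equiv.ext fun i => ?_
  by_cases hi : i ∈ dropSet π
  · refine (strictAntiOn_dropSet π).eqOn_of_image_eq (h ▸ strictAntiOn_dropSet σ) ?_ hi
    rw [hπ.image_dropSet h0, h, hσ.image_dropSet h0']
  · refine hπ.strictMonoOn_compl_dropSet.eqOn_of_image_eq
      (h ▸ hσ.strictMonoOn_compl_dropSet) ?_ hi
    rw [hπ.image_compl_dropSet h0, h, hσ.image_compl_dropSet h0']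

end IsMonotonePerm

section ofDropSet

variable (k) (D : Finset (Fin n)) (hD : D.card = k.val)

noncomputable def dropsOrderIso : {i // i ∈ D} ≃o {v : Fin n // v < k}ᵒᵈ :=
  Fintype.orderIsoOfCardEq _ _
    (by rw [Fintype.card_coe, Fintype.card_orderDual, Fin.card_subtype_lt, hD])

noncomputable def risesOrderIso : {i // i ∉ D} ≃o {v : Fin n // ¬v < k} :=
  Fintype.orderIsoOfCardEq _ _ (by
    rw [Fintype.card_subtype_compl, Fintype.card_subtype_compl, Fintype.card_coe,
      Fin.card_subtype_lt, hD])

noncomputable def ofDropSet : Equiv.Perm (Fin n) :=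
  Equiv.subtypeCongr ((dropsOrderIso k D hD).toEquiv.trans OrderDual.ofDual)
    (risesOrderIso k D hD).toEquiv

variable {k D}

theorem ofDropSet_apply_of_mem (hi : i ∈ D) :
    ofDropSet k D hD i = OrderDual.ofDual (dropsOrderIso k D hD ⟨i, hi⟩) :=
  Equiv.subtypeCongr_apply_of_pos _ _ hi

theorem ofDropSet_apply_of_notMem (hi : i ∉ D) :
    ofDropSet k D hD i = risesOrderIso k D hD ⟨i, hi⟩ :=
  Equiv.subtypeCongr_apply_of_neg _ _ hi

theorem ofDropSet_lt_iff : ofDropSet k D hD i < k ↔ i ∈ D := by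
  by_cases hi : i ∈ D
  · simpa [hi, ofDropSet_apply_of_mem hD hi] using
      (OrderDual.ofDual (dropsOrderIso k D hD ⟨i, hi⟩)).2
  · simpa [hi, ofDropSet_apply_of_notMem hD hi] using (risesOrderIso k D hD ⟨i, hi⟩).2

theorem preimage_ofDropSet_Iio : ofDropSet k D hD ⁻¹' Iio k = D := by
  ext i; exact ofDropSet_lt_iff hD

theorem strictAntiOn_ofDropSet : StrictAntiOn (ofDropSet k D hD) D := by
  intro i hi j hj hij
  rw [ofDropSet_apply_of_mem hD hi, ofDropSet_apply_of_mem hD hj]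
  exact (dropsOrderIso k D hD).strictMono (show (⟨i, hi⟩ : D) < ⟨j, hj⟩ from hij)

theorem strictMonoOn_ofDropSet : StrictMonoOn (ofDropSet k D hD) (D : Set (Fin n))ᶜ := by
  intro i hi j hj hij
  rw [ofDropSet_apply_of_notMem hD hi, ofDropSet_apply_of_notMem hD hj]
  exact (risesOrderIso k D hD).strictMono
    (show (⟨i, hi⟩ : {i // i ∉ D}) < ⟨j, hj⟩ from hij)

end ofDropSet

theorem isMonotonePerm_ofDropSet {D : Finset (Fin n)} (hD : D.card = k.val) :
    IsMonotonePerm (ofDropSet k D hD) := by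
  refine isMonotonePerm_of_strictAntiOn_of_strictMonoOn k ?_ ?_
  · rw [preimage_ofDropSet_Iio]
    exact strictAntiOn_ofDropSet hD
  · rw [← compl_Iio, preimage_compl, preimage_ofDropSet_Iio]
    exact strictMonoOn_ofDropSet hD

theorem ofDropSet_zero {D : Finset (Fin n)} (hD : D.card = k.val) (h0 : ⟨0, k.pos⟩ ∉ D) :
    ofDropSet k D hD ⟨0, k.pos⟩ = k := by
  have hk : ofDropSet k D hD ((ofDropSet k D hD).symm k) = k := Equiv.apply_symm_apply _ k
  have hk_notMem : (ofDropSet k D hD).symm k ∉ D := fun h =>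
    ((ofDropSet_lt_iff hD).2 h).ne hk
  refine le_antisymm ?_ (not_lt.1 ((ofDropSet_lt_iff hD).not.2 h0))
  calc ofDropSet k D hD ⟨0, k.pos⟩ ≤ ofDropSet k D hD ((ofDropSet k D hD).symm k) :=
        (strictMonoOn_ofDropSet hD).monotoneOn h0 hk_notMem (Nat.zero_le _)
    _ = k := hk

theorem dropSet_ofDropSet {D : Finset (Fin n)} (hD : D.card = k.val) (h0 : ⟨0, k.pos⟩ ∉ D) :
    dropSet (ofDropSet k D hD) = D :=
  Finset.coe_injective <| ((isMonotonePerm_ofDropSet hD).coe_dropSet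
    (ofDropSet_zero hD h0)).trans (preimage_ofDropSet_Iio hD)

end

/-- Positions and values are `0`-based: the start is `k + 1` in the paper's notation and drop
sets are subsets of `{1, …, n - 1}`. -/
theorem monotone_perm_drop_bijection (n : ℕ) (k : Fin n) :
    Set.BijOn (fun π : Equiv.Perm (Fin n) => dropSet π)
      {π : Equiv.Perm (Fin n) | IsMonotonePerm π ∧ π ⟨0, k.pos⟩ = k}
      {D : Finset (Fin n) | (⟨0, k.pos⟩ : Fin n) ∉ D ∧ D.card = k.val} ∧
    ∀ π : Equiv.Perm (Fin n), IsMonotonePerm π → π ⟨0, k.pos⟩ = k →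
      (∀ i : Fin n, IsDrop π i ↔ 0 < i.val ∧ π i < k) ∧
      (∀ i j : Fin n, IsDrop π i → IsDrop π j → i < j → π j < π i) ∧
      (∀ i j : Fin n, 0 < i.val → ¬ IsDrop π i → ¬ IsDrop π j → i < j → π i < π j) ∧
      (∀ i : Fin n, 0 < i.val → ¬ IsDrop π i → k < π i) := by
  refine ⟨⟨?mapsTo, ?injOn, ?surjOn⟩, fun π hπ h0 => ⟨fun i => ?_,
    fun i j _ hj hij => hj.2 i hij, fun i j _ _ hj hij => hπ.lt_of_not_isDrop hij hj,
    fun i hi hnd => hπ.lt_apply_of_not_isDrop h0 hi hnd⟩⟩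
  case mapsTo =>
    rintro π ⟨hπ, h0⟩
    exact ⟨zero_notMem_dropSet π k.pos, hπ.card_dropSet h0⟩
  case injOn =>
    rintro π ⟨hπ, h0⟩ σ ⟨hσ, h0'⟩ h
    exact hπ.eq_of_dropSet_eq h0 hσ h0' h
  case surjOn =>
    rintro D ⟨h0, hD⟩
    exact ⟨ofDropSet k D hD, ⟨isMonotonePerm_ofDropSet hD, ofDropSet_zero hD h0⟩,
      dropSet_ofDropSet hD h0⟩
  rw [hπ.isDrop_iff h0]
  exact ⟨fun h => ⟨val_pos_of_apply_ne h0 h.ne, h⟩, And.right⟩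
end

section
/- For a monotone permutation π ∈ S_n starting at k, with dr(π) denoting the sum of all drops of π, one has (−1)^{dr(π)} = (−1)^{k−1} · sign(π). -/
/-- `dr π` is the sum of the drops of `π`, as 1-based positions. -/
def dr {n : ℕ} (π : Equiv.Perm (Fin n)) : ℕ :=
  ∑ i ∈ Finset.univ.filter
      (fun i : Fin n => 0 < i.val ∧ ∀ j : Fin n, j < i → π i < π j), (i.val + 1)

/-!
Write `sign π` as the product, over pairs `i < j`, of `1` or `-1` according as `π i < π j` or not.
For a monotone `π` all pairs ending at `j` give the same factor, so they contribute `(-1)^j`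
(0-based `j`) if `j` is a drop and `1` otherwise. Hence `sign π` is `-1` to the sum of the 0-based
drops, which differs from `dr π` by the number of drops; and that number is `k - 1`, since the
drops are exactly the positions carrying the values below `π 0`.
-/

open Equiv Equiv.Perm Finset

instance {n : ℕ} (π : Perm (Fin n)) : DecidablePred (IsDrop π) :=
  fun i => inferInstanceAs (Decidable (0 < i.val ∧ ∀ j : Fin n, j < i → π i < π j))

theorem dr_eq_sum_filter_isDrop {n : ℕ} (π : Perm (Fin n)) :
    dr π = ∑ i ∈ univ.filter (IsDrop π), (i.val + 1) :=
  rfl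

namespace IsMonotonePerm

variable {n : ℕ}

theorem prod_Iio_ite_lt_eq {π : Perm (Fin n)} (h : IsMonotonePerm π) (j : Fin n) :
    ∏ i ∈ Iio j, (if π i < π j then 1 else -1 : ℤˣ) =
      if IsDrop π j then (-1) ^ (j : ℕ) else 1 := by
  split_ifs with hj
  · rw [prod_congr rfl fun i hi => if_neg (hj.2 i (mem_Iio.1 hi)).asymm, prod_const,
      Fin.card_Iio]
  · refine prod_eq_one fun i hi => if_pos ?_
    have hij : i < j := mem_Iio.1 hi
    rcases h j with hmax | hmin
    · exact hmax i hij
    · exact absurd ⟨(Nat.zero_le _).trans_lt hij, hmin⟩ hj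

theorem sign_eq_neg_one_pow_sum_isDrop {π : Perm (Fin n)} (h : IsMonotonePerm π) :
    sign π = (-1) ^ ∑ i ∈ univ.filter (IsDrop π), (i : ℕ) := by
  rw [sign_eq_prod_prod_Iio]
  simp_rw [h.prod_Iio_ite_lt_eq]
  rw [prod_ite, prod_const_one, mul_one, prod_pow_eq_pow_sum]

theorem isDrop_iff_lt_apply_zero {π : Perm (Fin (n + 1))} (h : IsMonotonePerm π)
    (i : Fin (n + 1)) : IsDrop π i ↔ π i < π 0 := by
  refine ⟨fun hi => hi.2 0 hi.1, fun hi => ?_⟩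
  have hi0 : 0 < i := Fin.pos_iff_ne_zero.2 fun h0 => hi.ne (h0 ▸ rfl)
  rcases h i with hmax | hmin
  · exact absurd (hmax 0 hi0) hi.asymm
  · exact ⟨hi0, hmin⟩

theorem card_filter_isDrop {π : Perm (Fin (n + 1))} (h : IsMonotonePerm π) :
    #(univ.filter (IsDrop π)) = π 0 := by
  rw [← Fin.card_Iio (π 0)]
  exact card_equiv π fun i => by simp [h.isDrop_iff_lt_apply_zero]

end IsMonotonePerm

/-- For a monotone permutation `π ∈ S_n` (with `n ≥ 1`) starting at `k` (1-based
`k = (π 0).val + 1`, so `k - 1 = (π 0).val`), one has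
`(-1)^{dr(π)} = (-1)^{k-1} · sign(π)`. -/
theorem neg_one_pow_dr_eq (n : ℕ) (π : Equiv.Perm (Fin (n + 1)))
    (h : IsMonotonePerm π) :
    ((-1 : ℤ)) ^ dr π = (-1 : ℤ) ^ (π 0).val * (Equiv.Perm.sign π : ℤ) := by
  rw [h.sign_eq_neg_one_pow_sum_isDrop, ← h.card_filter_isDrop, dr_eq_sum_filter_isDrop,
    sum_add_distrib, ← card_eq_sum_ones, pow_add]
  push_cast
  ring
end

section
/- Let M_n^{k,k−1} be the set of monotone permutations π ∈ S_n with π(1) = k and π(2) = k−1. The map sending π to the permutation π̄ ∈ S_{n−1} defined by π̄(1) = k−1 and, for 2 ≤ i ≤ n−1, π̄(i) = π(i+1) if π(i+1) < k and π̄(i) = π(i+1) − 1 if π(i+1) > k, is a bijection from M_n^{k,k−1} onto M_{n−1}^{k−1}, and it satisfies (−1)^{dr(π̄)} = (−1)^{dr(π)+k}. -/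
/-!
The map `π ↦ π̄` deletes the first entry of `π` and standardizes the rest; its inverse prepends
the value `ρ(1) + 1` to `ρ` and shifts the values `≥ ρ(1) + 1` up by one (`succAboveCons`).
As the first two values of `π` are adjacent, comparing a later entry with `π(1)` is the same as
comparing it with `π(2)`, so monotonicity transfers in both directions and the drops of `π` at
positions `≥ 3` are those of `π̄`, shifted by one. In a monotone permutation the drops are exactly
the positions whose value lies below the first value, so `π̄` has `k - 2` drops; with the extra drop
of `π` at position `2` this gives `dr π = dr π̄ + (k - 2) + 2`.
-/

open Finset

namespace IsMonotonePerm

variable {n : ℕ}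

lemma isDrop_iff_s5 {ρ : Equiv.Perm (Fin (n + 1))} (hρ : IsMonotonePerm ρ)
    (i : Fin (n + 1)) : IsDrop ρ i ↔ ρ i < ρ 0 := by
  refine ⟨fun h => h.2 0 h.1, fun h => ?_⟩
  have hi : 0 < i := Fin.pos_iff_ne_zero.2 fun hi => (hi ▸ h).false
  rcases hρ i with H | H
  · exact absurd (H 0 hi) (not_lt.2 h.le)
  · exact ⟨hi, H⟩

lemma dr_eq_sum_lt_zero {ρ : Equiv.Perm (Fin (n + 1))} (hρ : IsMonotonePerm ρ) :
    dr ρ = ∑ i with ρ i < ρ 0, (i.val + 1) :=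
  Finset.sum_congr (Finset.filter_congr fun i _ => hρ.isDrop_iff_s5 i) fun _ _ => rfl

end IsMonotonePerm

namespace Equiv.Perm

variable {n : ℕ}

def succAboveCons (p : Fin (n + 2)) (ρ : Perm (Fin (n + 1))) : Perm (Fin (n + 2)) :=
  (finSuccEquiv (n + 1)).trans (ρ.optionCongr.trans (finSuccEquiv' p).symm)

@[simp] lemma succAboveCons_zero (p : Fin (n + 2)) (ρ : Perm (Fin (n + 1))) :
    succAboveCons p ρ 0 = p := by
  simp [succAboveCons]

@[simp] lemma succAboveCons_succ (p : Fin (n + 2)) (ρ : Perm (Fin (n + 1))) (i : Fin (n + 1)) :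
    succAboveCons p ρ i.succ = p.succAbove (ρ i) := by
  simp [succAboveCons]

lemma succAboveCons_injective₂ : Function.Injective2 (succAboveCons (n := n)) := by
  intro p p' ρ ρ' h
  obtain rfl : p = p' := by simpa using congr($h 0)
  exact ⟨rfl, Equiv.ext fun i => p.succAbove_right_injective <| by simpa using congr($h i.succ)⟩

lemma exists_succAboveCons_eq (π : Perm (Fin (n + 2))) : ∃ ρ, succAboveCons (π 0) ρ = π := by
  set E : Perm (Option (Fin (n + 1))) :=
    (finSuccEquiv (n + 1)).symm.trans (π.trans (finSuccEquiv' (π 0)))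
  have hE : ∀ i, E (some i) = finSuccEquiv' (π 0) (π i.succ) := fun i => by simp [E]
  have hE_some : ∀ i, ∃ v, E (some i) = some v := fun i =>
    Option.ne_none_iff_exists'.mp <| by simp [hE, (Fin.succ_ne_zero i).symm]
  refine ⟨removeNone E, Equiv.ext fun i => ?_⟩
  cases i using Fin.cases with
  | zero => simp
  | succ i =>
    rw [succAboveCons_succ, ← finSuccEquiv'_symm_some, removeNone_some E (hE_some i), hE,
      symm_apply_apply]

lemma card_filter_apply_lt_apply_zero (ρ : Perm (Fin (n + 1))) :
    #{i | ρ i < ρ 0} = (ρ 0).val := by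
  rw [← Fin.card_Iio]
  exact Finset.card_bij' (fun j _ => ρ j) (fun v _ => ρ.symm v) (by simp) (by simp) (by simp)
    (by simp)

lemma exists_eq_succAboveCons_of_val_one_add_one {π : Perm (Fin (n + 2))}
    (h : (π 1).val + 1 = (π 0).val) : ∃ ρ, π = succAboveCons (ρ 0).succ ρ := by
  obtain ⟨ρ, hρ⟩ := exists_succAboveCons_eq π
  have hp : π 0 = (ρ 0).succ := by
    have h1 : π 1 = (π 0).succAbove (ρ 0) := by
      rw [← Fin.succ_zero_eq_one, ← succAboveCons_succ, hρ]
    have hlt : (ρ 0).castSucc < π 0 := by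
      rw [← Fin.succAbove_lt_iff_castSucc_lt, ← h1, Fin.lt_def]
      omega
    rw [h1, Fin.succAbove_of_castSucc_lt _ _ hlt, Fin.val_castSucc] at h
    exact Fin.ext (by rw [Fin.val_succ]; omega)
  exact ⟨ρ, by rw [← hp, hρ]⟩

section HeadSucc

variable (ρ : Perm (Fin (n + 1)))

lemma succAboveCons_succ_lt_succ_iff (p : Fin (n + 2)) (i j : Fin (n + 1)) :
    succAboveCons p ρ i.succ < succAboveCons p ρ j.succ ↔ ρ i < ρ j := by
  simp

lemma succAboveCons_succ_lt_zero_iff (j : Fin (n + 1)) :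
    succAboveCons (ρ 0).succ ρ j.succ < succAboveCons (ρ 0).succ ρ 0 ↔ ρ j ≤ ρ 0 := by
  simp [Fin.succAbove_lt_iff_castSucc_lt, Fin.castSucc_lt_succ_iff]

lemma succAboveCons_zero_lt_succ_iff (j : Fin (n + 1)) :
    succAboveCons (ρ 0).succ ρ 0 < succAboveCons (ρ 0).succ ρ j.succ ↔ ρ 0 < ρ j := by
  simp [Fin.lt_succAbove_iff_le_castSucc, Fin.succ_le_castSucc_iff]

@[simp] lemma succAboveCons_one : succAboveCons (ρ 0).succ ρ 1 = (ρ 0).castSucc := by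
  rw [← Fin.succ_zero_eq_one, succAboveCons_succ, Fin.succAbove_succ_self]

lemma val_succAboveCons_succ (i : Fin (n + 1)) :
    (succAboveCons (ρ 0).succ ρ i.succ).val =
      if ρ i ≤ ρ 0 then (ρ i).val else (ρ i).val + 1 := by
  rw [succAboveCons_succ]
  split_ifs with h
  · rw [Fin.succAbove_of_castSucc_lt _ _ (Fin.castSucc_lt_succ_iff.2 h), Fin.val_castSucc]
  · rw [Fin.succAbove_of_le_castSucc _ _ (Fin.succ_le_castSucc_iff.2 (not_le.1 h)), Fin.val_succ]

lemma isMonotonePerm_succAboveCons_iff :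
    IsMonotonePerm (succAboveCons (ρ 0).succ ρ) ↔ IsMonotonePerm ρ := by
  unfold IsMonotonePerm
  simp only [Fin.forall_fin_succ, Fin.succ_lt_succ_iff, Fin.succ_pos, Fin.not_lt_zero,
    succAboveCons_succ_lt_succ_iff, succAboveCons_succ_lt_zero_iff,
    succAboveCons_zero_lt_succ_iff]
  simp only [succAboveCons_zero, lt_self_iff_false, imp_self, le_refl, implies_true,
    IsEmpty.forall_iff, and_self, or_self, imp_false, not_true_eq_false, and_true, or_true,
    forall_const, and_self_left, true_and]
  exact forall_congr' fun i => or_congr_right ⟨fun h => h.2, fun h => ⟨h.1.le, h⟩⟩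

lemma dr_succAboveCons (hρ : IsMonotonePerm ρ) :
    dr (succAboveCons (ρ 0).succ ρ) = dr ρ + (ρ 0).val + 2 := by
  have hσ := (isMonotonePerm_succAboveCons_iff ρ).2 hρ
  rw [hσ.dr_eq_sum_lt_zero, hρ.dr_eq_sum_lt_zero, ← card_filter_apply_lt_apply_zero,
    Finset.card_eq_sum_ones, Finset.sum_filter, Finset.sum_filter, Finset.sum_filter,
    Fin.sum_univ_succ]
  simp only [lt_self_iff_false, if_false, zero_add, succAboveCons_succ_lt_zero_iff]
  have hterm : ∀ x : Fin (n + 1), (if ρ x ≤ ρ 0 then x.succ.val + 1 else 0) =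
      (if ρ x < ρ 0 then x.val + 1 else 0) + (if ρ x < ρ 0 then 1 else 0) +
        (if x = 0 then 2 else 0) := by
    intro x
    rcases eq_or_ne x 0 with rfl | hx
    · simp
    · simp only [(ρ.injective.ne hx).le_iff_lt, if_neg hx, Fin.val_succ]
      split_ifs <;> rfl
  rw [Finset.sum_congr rfl fun x _ => hterm x, Finset.sum_add_distrib, Finset.sum_add_distrib,
    Finset.sum_ite_eq']
  simp

end HeadSucc

end Equiv.Perm

open Equiv.Perm in
theorem monotone_bij_second_is_pred_general (n k : ℕ) :
    ∃ Φ : {π : Equiv.Perm (Fin (n + 2)) //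
            IsMonotonePerm π ∧ (π 0).val + 1 = k ∧ (π 1).val + 2 = k} →
          {ρ : Equiv.Perm (Fin (n + 1)) // IsMonotonePerm ρ ∧ (ρ 0).val + 2 = k},
      Function.Bijective Φ ∧
      ∀ π, (∀ i : Fin (n + 1), 0 < i.val →
          (((π.1 i.succ).val + 1 < k → ((Φ π).1 i).val = (π.1 i.succ).val) ∧
           (k < (π.1 i.succ).val + 1 → ((Φ π).1 i).val + 1 = (π.1 i.succ).val))) ∧
        (-1 : ℤ) ^ dr (Φ π).1 = (-1 : ℤ) ^ (dr π.1 + k) := by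
  let Ψ : {ρ : Equiv.Perm (Fin (n + 1)) // IsMonotonePerm ρ ∧ (ρ 0).val + 2 = k} →
      {π : Equiv.Perm (Fin (n + 2)) // IsMonotonePerm π ∧ (π 0).val + 1 = k ∧ (π 1).val + 2 = k} :=
    fun ρ => ⟨succAboveCons (ρ.1 0).succ ρ.1, (isMonotonePerm_succAboveCons_iff ρ.1).2 ρ.2.1,
      by simp [← ρ.2.2], by simp [← ρ.2.2]⟩
  have hΨ : Function.Bijective Ψ := by
    refine ⟨fun ρ ρ' h => Subtype.ext (succAboveCons_injective₂ congr($h.1)).2, fun π => ?_⟩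
    obtain ⟨π, hπ, hπ0, hπ1⟩ := π
    obtain ⟨ρ, rfl⟩ := exists_eq_succAboveCons_of_val_one_add_one (π := π) (by omega)
    exact ⟨⟨ρ, (isMonotonePerm_succAboveCons_iff ρ).1 hπ, by simpa using hπ1⟩, rfl⟩
  refine ⟨(Equiv.ofBijective Ψ hΨ).symm, (Equiv.ofBijective Ψ hΨ).symm.bijective, ?_⟩
  intro π
  obtain ⟨⟨ρ, hρ, hρ0⟩, rfl⟩ := hΨ.2 π
  rw [Equiv.ofBijective_symm_apply_apply]
  refine ⟨fun i _ => ?_, ?_⟩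
  · simp only [Ψ, val_succAboveCons_succ, Fin.le_def]
    split_ifs <;> omega
  · simp only [Ψ, dr_succAboveCons ρ hρ, hρ0, add_assoc, ← two_mul, pow_add, pow_mul]
    norm_num

/-- (Lemma 1, first half.) Let `M_n^{k,k-1}` (here `n` is `n + 2`, `2 ≤ k ≤ n + 2`, values
are recorded 1-based via `(π i).val + 1`) be the set of monotone permutations with
`π(1) = k` and `π(2) = k - 1`. The map `π ↦ π̄` with `π̄(1) = k - 1` and, for `i ≥ 2`,
`π̄(i) = π(i+1)` if `π(i+1) < k` and `π̄(i) = π(i+1) - 1` if `π(i+1) > k`, is a bijection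
from `M_n^{k,k-1}` onto `M_{n-1}^{k-1}`, and `(-1)^{dr(π̄)} = (-1)^{dr(π) + k}`. -/
theorem monotone_bij_second_is_pred (n k : ℕ) (hk : 2 ≤ k) (hkn : k ≤ n + 2) :
    ∃ Φ : {π : Equiv.Perm (Fin (n + 2)) //
            IsMonotonePerm π ∧ (π 0).val + 1 = k ∧ (π 1).val + 2 = k} →
          {ρ : Equiv.Perm (Fin (n + 1)) // IsMonotonePerm ρ ∧ (ρ 0).val + 2 = k},
      Function.Bijective Φ ∧
      ∀ π, (∀ i : Fin (n + 1), 0 < i.val →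
          (((π.1 i.succ).val + 1 < k → ((Φ π).1 i).val = (π.1 i.succ).val) ∧
           (k < (π.1 i.succ).val + 1 → ((Φ π).1 i).val + 1 = (π.1 i.succ).val))) ∧
        (-1 : ℤ) ^ dr (Φ π).1 = (-1 : ℤ) ^ (dr π.1 + k) :=
  monotone_bij_second_is_pred_general n k
end

section
/- Let M_n^{k,k+1} be the set of monotone permutations π ∈ S_n with π(1) = k and π(2) = k+1. The map sending π to π̄ ∈ S_{n−1} defined by π̄(1) = k and, for 2 ≤ i ≤ n−1, π̄(i) = π(i+1) if π(i+1) < k and π̄(i) = π(i+1) − 1 if π(i+1) > k, is a bijection from M_n^{k,k+1} onto M_{n−1}^{k}, satisfying (−1)^{dr(π̄)} = (−1)^{dr(π)+k−1}. -/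
namespace MonoAux

def dval (k v : ℕ) : ℕ := if v < k then v else v - 1
def uval (k v : ℕ) : ℕ := if v < k then v else v + 1

lemma dval_lt_dval {k v w : ℕ} (hv : v ≠ k) (hw : w ≠ k) :
    dval k v < dval k w ↔ v < w := by unfold dval; split_ifs <;> omega

lemma uval_dval {k v : ℕ} (hv : v ≠ k) : uval k (dval k v) = v := by
  unfold dval uval; split_ifs <;> omega

lemma dval_uval (k w : ℕ) : dval k (uval k w) = w := by
  unfold dval uval; split_ifs <;> omega

lemma uval_ne (k w : ℕ) : uval k w ≠ k := by unfold uval; split_ifs <;> omega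

lemma uval_lt_uval (k : ℕ) {v w : ℕ} : uval k v < uval k w ↔ v < w := by
  unfold uval; split_ifs <;> omega

variable {n k : ℕ}

def spos (n : ℕ) (i : Fin (n+1)) : Fin (n+2) :=
  ⟨if i.1 = 0 then 0 else i.1 + 1, by have := i.isLt; split <;> omega⟩

def tpos (n : ℕ) (j : Fin (n+2)) : Fin (n+1) :=
  ⟨if j.1 = 0 then 0 else j.1 - 1, by have := j.isLt; split <;> omega⟩

lemma spos_val (i : Fin (n+1)) : (spos n i).1 = if i.1 = 0 then 0 else i.1 + 1 := rfl
lemma tpos_val (j : Fin (n+2)) : (tpos n j).1 = if j.1 = 0 then 0 else j.1 - 1 := rfl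

lemma spos_lt_spos {i i' : Fin (n+1)} : spos n i < spos n i' ↔ i < i' := by
  simp only [Fin.lt_def, spos_val]; split_ifs <;> omega

lemma spos_ne_one (i : Fin (n+1)) : (spos n i).1 ≠ 1 := by
  rw [spos_val]; split <;> omega

lemma tpos_spos (i : Fin (n+1)) : tpos n (spos n i) = i := by
  apply Fin.ext; rw [tpos_val, spos_val]
  by_cases h : i.1 = 0
  · simp [h]
  · rw [if_neg h, if_neg (by omega)]; omega

lemma spos_tpos {j : Fin (n+2)} (hj : j.1 ≠ 1) : spos n (tpos n j) = j := by
  apply Fin.ext; rw [spos_val, tpos_val]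
  by_cases h : j.1 = 0
  · simp [h]
  · rw [if_neg h, if_neg (by omega)]; omega

lemma spos_zero : spos n 0 = 0 := by apply Fin.ext; rw [spos_val]; simp

lemma tpos_zero : tpos n 0 = 0 := by apply Fin.ext; rw [tpos_val]; simp

lemma spos_succ {i : Fin (n+1)} (hi : 0 < i.1) : spos n i = i.succ := by
  apply Fin.ext; rw [spos_val, Fin.val_succ]; split_ifs <;> omega

def fF (n k : ℕ) (hkn : k ≤ n + 1) (π : Equiv.Perm (Fin (n+2))) (i : Fin (n+1)) : Fin (n+1) :=
  ⟨dval k (π (spos n i)).1, by have := (π (spos n i)).isLt; unfold dval; split <;> omega⟩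

def gG (n k : ℕ) (hkn : k ≤ n + 1) (ρ : Equiv.Perm (Fin (n+1))) (j : Fin (n+2)) : Fin (n+2) :=
  if j.1 = 1 then ⟨k, by omega⟩ else
    ⟨uval k (ρ (tpos n j)).1, by have := (ρ (tpos n j)).isLt; unfold uval; split <;> omega⟩

lemma fF_val (hkn : k ≤ n + 1) (π : Equiv.Perm (Fin (n+2))) (i : Fin (n+1)) :
    (fF n k hkn π i).1 = dval k (π (spos n i)).1 := rfl

lemma gG_val_one (hkn : k ≤ n + 1) (ρ : Equiv.Perm (Fin (n+1))) {j : Fin (n+2)} (hj : j.1 = 1) :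
    (gG n k hkn ρ j).1 = k := by unfold gG; rw [if_pos hj]

lemma gG_val_ne (hkn : k ≤ n + 1) (ρ : Equiv.Perm (Fin (n+1))) {j : Fin (n+2)} (hj : j.1 ≠ 1) :
    (gG n k hkn ρ j).1 = uval k (ρ (tpos n j)).1 := by unfold gG; rw [if_neg hj]

lemma pi_ne {π : Equiv.Perm (Fin (n+2))} (h1 : (π 1).1 = k) {j : Fin (n+2)} (hj : j.1 ≠ 1) :
    (π j).1 ≠ k := by
  intro h
  have h2 : π j = π 1 := Fin.ext (by omega)
  have h3 := π.injective h2
  apply hj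
  rw [h3, Fin.val_one]

lemma fF_injective (hkn : k ≤ n + 1) (π : Equiv.Perm (Fin (n+2))) (h1 : (π 1).1 = k) :
    Function.Injective (fF n k hkn π) := by
  intro a b hab
  have hva := pi_ne h1 (spos_ne_one a)
  have hvb := pi_ne h1 (spos_ne_one b)
  have h : dval k (π (spos n a)).1 = dval k (π (spos n b)).1 := congrArg Fin.val hab
  have hv : (π (spos n a)).1 = (π (spos n b)).1 := by
    unfold dval at h; split_ifs at h <;> omega
  have h4 := congrArg Fin.val (π.injective (Fin.ext hv))
  rw [spos_val, spos_val] at h4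
  apply Fin.ext; split_ifs at h4 <;> omega

lemma gG_injective (hkn : k ≤ n + 1) (ρ : Equiv.Perm (Fin (n+1))) :
    Function.Injective (gG n k hkn ρ) := by
  intro a b hab
  unfold gG at hab
  split_ifs at hab with ha hb hb
  · exact Fin.ext (by omega)
  · rw [Fin.mk.injEq] at hab
    exact absurd hab.symm (uval_ne k _)
  · rw [Fin.mk.injEq] at hab
    exact absurd hab (uval_ne k _)
  · rw [Fin.mk.injEq] at hab
    have h2 : (ρ (tpos n a)).1 = (ρ (tpos n b)).1 := by revert hab; unfold uval; split_ifs <;> omega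
    have h3 := congrArg Fin.val (ρ.injective (Fin.ext h2))
    rw [tpos_val, tpos_val] at h3
    apply Fin.ext; split_ifs at h3 <;> omega

lemma fF_monotone (hkn : k ≤ n + 1) {π : Equiv.Perm (Fin (n+2))}
    (hm : IsMonotonePerm π) (h1 : (π 1).1 = k) (hbij : Function.Bijective (fF n k hkn π)) :
    IsMonotonePerm (Equiv.ofBijective (fF n k hkn π) hbij) := by
  intro i
  rcases hm (spos n i) with h | h
  · left; intro j hj
    show fF n k hkn π j < fF n k hkn π i
    rw [Fin.lt_def, fF_val, fF_val]
    have := h (spos n j) (spos_lt_spos.mpr hj)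
    rw [Fin.lt_def] at this
    exact (dval_lt_dval (pi_ne h1 (spos_ne_one j)) (pi_ne h1 (spos_ne_one i))).mpr this
  · right; intro j hj
    show fF n k hkn π i < fF n k hkn π j
    rw [Fin.lt_def, fF_val, fF_val]
    have := h (spos n j) (spos_lt_spos.mpr hj)
    rw [Fin.lt_def] at this
    exact (dval_lt_dval (pi_ne h1 (spos_ne_one i)) (pi_ne h1 (spos_ne_one j))).mpr this

lemma fF_zero (hkn : k ≤ n + 1) {π : Equiv.Perm (Fin (n+2))} (h0 : (π 0).1 + 1 = k)
    (hbij : Function.Bijective (fF n k hkn π)) :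
    ((Equiv.ofBijective (fF n k hkn π) hbij) 0).1 + 1 = k := by
  show (fF n k hkn π 0).1 + 1 = k
  rw [fF_val, spos_zero]
  unfold dval; split <;> omega

lemma gG_monotone (hk : 1 ≤ k) (hkn : k ≤ n + 1) {ρ : Equiv.Perm (Fin (n+1))}
    (hm : IsMonotonePerm ρ) (h0 : (ρ 0).1 + 1 = k)
    (hbij : Function.Bijective (gG n k hkn ρ)) :
    IsMonotonePerm (Equiv.ofBijective (gG n k hkn ρ) hbij) := by
  intro m
  rcases Nat.lt_or_ge m.1 2 with hm2 | hm2
  · left; intro j hj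
    rw [Fin.lt_def] at hj
    show gG n k hkn ρ j < gG n k hkn ρ m
    rcases Nat.lt_or_ge m.1 1 with hm1 | hm1
    · omega
    · have hm1' : m.1 = 1 := by omega
      have hj0 : j.1 = 0 := by omega
      rw [Fin.lt_def, gG_val_one hkn ρ hm1', gG_val_ne hkn ρ (by omega)]
      have ht : tpos n j = 0 := Fin.ext (by rw [tpos_val, if_pos hj0]; simp)
      rw [ht]
      unfold uval; split <;> omega
  · have hi1 : m.1 - 1 < n + 1 := by have := m.isLt; omega
    set i : Fin (n+1) := ⟨m.1 - 1, hi1⟩ with hidef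
    have htm : tpos n m = i := Fin.ext (by rw [tpos_val, if_neg (by omega)])
    rcases hm i with h | h
    · have h0i := h 0 (by rw [Fin.lt_def]; simp [hidef]; omega)
      rw [Fin.lt_def] at h0i
      have hρi : k ≤ (ρ i).1 := by omega
      left; intro j' hj'
      rw [Fin.lt_def] at hj'
      show gG n k hkn ρ j' < gG n k hkn ρ m
      rw [Fin.lt_def, gG_val_ne hkn ρ (by omega : m.1 ≠ 1), htm]
      by_cases hj1 : j'.1 = 1
      · rw [gG_val_one hkn ρ hj1]
        unfold uval; split <;> omega
      · rw [gG_val_ne hkn ρ hj1]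
        have htj : tpos n j' < i := by rw [Fin.lt_def, tpos_val]; split <;> simp [hidef] <;> omega
        have := h (tpos n j') htj
        rw [Fin.lt_def] at this
        exact (uval_lt_uval k).mpr this
    · have h0i := h 0 (by rw [Fin.lt_def]; simp [hidef]; omega)
      rw [Fin.lt_def] at h0i
      have hρi : (ρ i).1 + 1 < k := by omega
      right; intro j' hj'
      rw [Fin.lt_def] at hj'
      show gG n k hkn ρ m < gG n k hkn ρ j'
      rw [Fin.lt_def, gG_val_ne hkn ρ (by omega : m.1 ≠ 1), htm]
      by_cases hj1 : j'.1 = 1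
      · rw [gG_val_one hkn ρ hj1]
        unfold uval; split <;> omega
      · rw [gG_val_ne hkn ρ hj1]
        have htj : tpos n j' < i := by rw [Fin.lt_def, tpos_val]; split <;> simp [hidef] <;> omega
        have := h (tpos n j') htj
        rw [Fin.lt_def] at this
        exact (uval_lt_uval k).mpr this

lemma gG_zero (hk : 1 ≤ k) (hkn : k ≤ n + 1) {ρ : Equiv.Perm (Fin (n+1))}
    (h0 : (ρ 0).1 + 1 = k) (hbij : Function.Bijective (gG n k hkn ρ)) :
    ((Equiv.ofBijective (gG n k hkn ρ) hbij) 0).1 + 1 = k := by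
  show (gG n k hkn ρ 0).1 + 1 = k
  rw [gG_val_ne hkn ρ (by simp), tpos_zero]
  unfold uval; split <;> omega

lemma gG_one (hk : 1 ≤ k) (hkn : k ≤ n + 1) {ρ : Equiv.Perm (Fin (n+1))}
    (hbij : Function.Bijective (gG n k hkn ρ)) :
    ((Equiv.ofBijective (gG n k hkn ρ) hbij) 1).1 = k := by
  show (gG n k hkn ρ 1).1 = k
  exact gG_val_one hkn ρ (Fin.val_one _)

lemma drop_iff (hkn : k ≤ n + 1) {π : Equiv.Perm (Fin (n+2))}
    (h1 : (π 1).1 = k) (h0 : (π 0).1 + 1 = k)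
    (hbij : Function.Bijective (fF n k hkn π))
    {i : Fin (n+1)} (hi : 0 < i.1) :
    (∀ j, j < i → (Equiv.ofBijective (fF n k hkn π) hbij) i
        < (Equiv.ofBijective (fF n k hkn π) hbij) j)
      ↔ (∀ j', j' < spos n i → π (spos n i) < π j') := by
  have key : ∀ x, (Equiv.ofBijective (fF n k hkn π) hbij) x = fF n k hkn π x := fun _ => rfl
  simp only [key]
  constructor
  · intro h j' hj'
    have hvk : (π (spos n i)).1 ≠ k := pi_ne h1 (spos_ne_one i)
    have hv : (π (spos n i)).1 + 1 < k := by
      have h00 := h 0 (by rw [Fin.lt_def]; simpa using hi)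
      rw [Fin.lt_def, fF_val, fF_val, spos_zero] at h00
      unfold dval at h00; split_ifs at h00 <;> omega
    by_cases hj'1 : j'.1 = 1
    · rw [Fin.lt_def]
      have hx : (π j').1 = k := by
        rw [show j' = (1 : Fin (n+2)) from Fin.ext (by rw [hj'1, Fin.val_one]), h1]
      omega
    · by_cases hj'0 : j'.1 = 0
      · rw [Fin.lt_def]
        have hx : (π j').1 + 1 = k := by
          rw [show j' = (0 : Fin (n+2)) from Fin.ext (by rw [hj'0, Fin.val_zero]), h0]
        omega
      · have hjlt : tpos n j' < i := by
          rw [Fin.lt_def, tpos_val, if_neg hj'0]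
          rw [Fin.lt_def, spos_val, if_neg (by omega)] at hj'
          omega
        have hdrop := h (tpos n j') hjlt
        rw [Fin.lt_def, fF_val, fF_val, spos_tpos hj'1] at hdrop
        rw [Fin.lt_def]
        exact (dval_lt_dval hvk (pi_ne h1 hj'1)).mp hdrop
  · intro h j hj
    rw [Fin.lt_def, fF_val, fF_val]
    have := h (spos n j) (spos_lt_spos.mpr hj)
    rw [Fin.lt_def] at this
    exact (dval_lt_dval (pi_ne h1 (spos_ne_one i)) (pi_ne h1 (spos_ne_one j))).mpr this

lemma card_drops (hkn : k ≤ n + 1) {ρ : Equiv.Perm (Fin (n+1))}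
    (hm : IsMonotonePerm ρ) (h0 : (ρ 0).1 + 1 = k) :
    (Finset.univ.filter
      (fun i : Fin (n+1) => 0 < i.val ∧ ∀ j : Fin (n+1), j < i → ρ i < ρ j)).card = k - 1 := by
  have hset : Finset.univ.filter
      (fun i : Fin (n+1) => 0 < i.val ∧ ∀ j : Fin (n+1), j < i → ρ i < ρ j)
      = Finset.univ.filter (fun i : Fin (n+1) => ρ i < ρ 0) := by
    ext i
    simp only [Finset.mem_filter, Finset.mem_univ, true_and]
    constructor
    · rintro ⟨hi, h⟩
      exact h 0 (by rw [Fin.lt_def, Fin.val_zero]; exact hi)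
    · intro hlt
      have hi : 0 < i.1 := by
        rcases Nat.eq_zero_or_pos i.1 with h | h
        · exact absurd (by rw [show i = (0 : Fin (n+1)) from Fin.ext (by rw [h, Fin.val_zero])] at hlt; exact hlt) (lt_irrefl _)
        · exact h
      refine ⟨hi, ?_⟩
      rcases hm i with h | h
      · exact absurd (h 0 (by rw [Fin.lt_def, Fin.val_zero]; exact hi)) (fun hc => absurd hlt (not_lt.mpr (le_of_lt hc)))
      · exact h
  rw [hset]
  have hcard : (Finset.univ.filter (fun i : Fin (n+1) => ρ i < ρ 0)).card
      = (Finset.Iio (ρ 0)).card := by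
    apply Finset.card_equiv ρ
    intro i
    simp [Finset.mem_Iio]
  rw [hcard, Fin.card_Iio]
  omega

lemma dr_eq (hkn : k ≤ n + 1) {π : Equiv.Perm (Fin (n+2))}
    (hm : IsMonotonePerm π) (h1 : (π 1).1 = k) (h0 : (π 0).1 + 1 = k)
    (hbij : Function.Bijective (fF n k hkn π)) :
    dr π = dr (Equiv.ofBijective (fF n k hkn π) hbij) + (k - 1) := by
  set ρ := Equiv.ofBijective (fF n k hkn π) hbij with hρ
  have hmρ : IsMonotonePerm ρ := fF_monotone hkn hm h1 hbij
  have h0ρ : (ρ 0).1 + 1 = k := fF_zero hkn h0 hbij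
  have hsum : dr π = ∑ i ∈ Finset.univ.filter
      (fun i : Fin (n+1) => 0 < i.val ∧ ∀ j : Fin (n+1), j < i → ρ i < ρ j), (i.val + 2) := by
    unfold dr
    apply Finset.sum_nbij' (tpos n) (spos n)
    · intro m hmem
      rw [Finset.mem_filter] at hmem ⊢
      obtain ⟨-, hm0, hdrop⟩ := hmem
      have hm1 : m.1 ≠ 1 := by
        intro hm1
        have := hdrop 0 (by rw [Fin.lt_def, Fin.val_zero]; omega)
        rw [Fin.lt_def] at this
        have hx : (π m).1 = k := by
          rw [show m = (1 : Fin (n+2)) from Fin.ext (by rw [hm1, Fin.val_one]), h1]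
        omega
      have hti : 0 < (tpos n m).1 := by rw [tpos_val, if_neg (by omega)]; omega
      refine ⟨Finset.mem_univ _, hti, ?_⟩
      rw [hρ]
      rw [(drop_iff hkn h1 h0 hbij hti : _)]
      rw [spos_tpos hm1]
      exact hdrop
    · intro i hmem
      rw [Finset.mem_filter] at hmem ⊢
      obtain ⟨-, hi0, hdrop⟩ := hmem
      refine ⟨Finset.mem_univ _, ?_, ?_⟩
      · rw [spos_val, if_neg (by omega)]; omega
      · exact (drop_iff hkn h1 h0 hbij hi0).mp hdrop
    · intro m hmem
      rw [Finset.mem_filter] at hmem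
      obtain ⟨-, hm0, hdrop⟩ := hmem
      have hm1 : m.1 ≠ 1 := by
        intro hm1
        have := hdrop 0 (by rw [Fin.lt_def, Fin.val_zero]; omega)
        rw [Fin.lt_def] at this
        have hx : (π m).1 = k := by
          rw [show m = (1 : Fin (n+2)) from Fin.ext (by rw [hm1, Fin.val_one]), h1]
        omega
      exact spos_tpos hm1
    · intro i _
      exact tpos_spos i
    · intro m hmem
      rw [Finset.mem_filter] at hmem
      obtain ⟨-, hm0, -⟩ := hmem
      rw [tpos_val, if_neg (by omega)]
      omega
  rw [hsum]
  have : ∀ i ∈ Finset.univ.filter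
      (fun i : Fin (n+1) => 0 < i.val ∧ ∀ j : Fin (n+1), j < i → ρ i < ρ j),
      i.val + 2 = (i.val + 1) + 1 := by intro i _; omega
  rw [Finset.sum_congr rfl this, Finset.sum_add_distrib, Finset.sum_const, smul_eq_mul, mul_one]
  unfold dr
  rw [card_drops hkn hmρ h0ρ]

lemma gG_fF (hkn : k ≤ n + 1) {π : Equiv.Perm (Fin (n+2))} (h1 : (π 1).1 = k)
    (hbij : Function.Bijective (fF n k hkn π)) (j : Fin (n+2)) :
    gG n k hkn (Equiv.ofBijective (fF n k hkn π) hbij) j = π j := by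
  by_cases hj : j.1 = 1
  · apply Fin.ext
    rw [gG_val_one hkn _ hj]
    rw [show j = (1 : Fin (n+2)) from Fin.ext (by rw [hj, Fin.val_one])]
    exact h1.symm
  · apply Fin.ext
    rw [gG_val_ne hkn _ hj]
    have hred : (Equiv.ofBijective (fF n k hkn π) hbij) (tpos n j) = fF n k hkn π (tpos n j) := rfl
    rw [hred, fF_val, spos_tpos hj]
    exact uval_dval (pi_ne h1 hj)

lemma fF_gG (hkn : k ≤ n + 1) {ρ : Equiv.Perm (Fin (n+1))}
    (hbij : Function.Bijective (gG n k hkn ρ)) (i : Fin (n+1)) :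
    fF n k hkn (Equiv.ofBijective (gG n k hkn ρ) hbij) i = ρ i := by
  apply Fin.ext
  rw [fF_val]
  have hred : (Equiv.ofBijective (gG n k hkn ρ) hbij) (spos n i) = gG n k hkn ρ (spos n i) := rfl
  rw [hred, gG_val_ne hkn ρ (spos_ne_one i), tpos_spos]
  exact dval_uval k _

lemma fF_cond (hkn : k ≤ n + 1) {π : Equiv.Perm (Fin (n+2))} (h1 : (π 1).1 = k)
    (hbij : Function.Bijective (fF n k hkn π)) {i : Fin (n+1)} (hi : 0 < i.1) :
    ((π i.succ).val + 1 < k →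
        ((Equiv.ofBijective (fF n k hkn π) hbij) i).val = (π i.succ).val) ∧
    (k < (π i.succ).val + 1 →
        ((Equiv.ofBijective (fF n k hkn π) hbij) i).val + 1 = (π i.succ).val) := by
  have key : ((Equiv.ofBijective (fF n k hkn π) hbij) i).val = dval k (π (spos n i)).1 := rfl
  rw [spos_succ hi] at key
  have hne : (π i.succ).1 ≠ k := pi_ne h1 (by rw [Fin.val_succ]; omega)
  constructor
  · intro h
    rw [key]
    unfold dval; rw [if_pos (by omega)]
  · intro h
    rw [key]
    unfold dval; rw [if_neg (by omega)]
    omega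

end MonoAux

open MonoAux

/-- (Lemma 1, second half.) Let `M_n^{k,k+1}` (here `n` is `n + 2`, `1 ≤ k ≤ n + 1`, values
recorded 1-based via `(π i).val + 1`) be the monotone permutations with `π(1) = k` and
`π(2) = k + 1`. The map `π ↦ π̄` with `π̄(1) = k` and, for `i ≥ 2`, `π̄(i) = π(i+1)` if
`π(i+1) < k` and `π̄(i) = π(i+1) - 1` if `π(i+1) > k`, is a bijection from `M_n^{k,k+1}`
onto `M_{n-1}^{k}`, and `(-1)^{dr(π̄)} = (-1)^{dr(π) + k - 1}`. -/
theorem monotone_bij_second_is_succ (n k : ℕ) (hk : 1 ≤ k) (hkn : k ≤ n + 1) :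
    ∃ Φ : {π : Equiv.Perm (Fin (n + 2)) //
            IsMonotonePerm π ∧ (π 0).val + 1 = k ∧ (π 1).val = k} →
          {ρ : Equiv.Perm (Fin (n + 1)) // IsMonotonePerm ρ ∧ (ρ 0).val + 1 = k},
      Function.Bijective Φ ∧
      ∀ π, (∀ i : Fin (n + 1), 0 < i.val →
          (((π.1 i.succ).val + 1 < k → ((Φ π).1 i).val = (π.1 i.succ).val) ∧
           (k < (π.1 i.succ).val + 1 → ((Φ π).1 i).val + 1 = (π.1 i.succ).val))) ∧
        (-1 : ℤ) ^ dr (Φ π).1 = (-1 : ℤ) ^ (dr π.1 + k - 1) := by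
  classical
  refine ⟨fun π => ⟨Equiv.ofBijective (fF n k hkn π.1)
      (Finite.injective_iff_bijective.mp (fF_injective hkn π.1 π.2.2.2)),
      fF_monotone hkn π.2.1 π.2.2.2 _, fF_zero hkn π.2.2.1 _⟩, ?_, ?_⟩
  · rw [Function.bijective_iff_has_inverse]
    refine ⟨fun ρ => ⟨Equiv.ofBijective (gG n k hkn ρ.1)
        (Finite.injective_iff_bijective.mp (gG_injective hkn ρ.1)),
        gG_monotone hk hkn ρ.2.1 ρ.2.2 _,
        gG_zero hk hkn ρ.2.2 _, gG_one hk hkn _⟩, ?_, ?_⟩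
    · intro π
      apply Subtype.ext
      apply Equiv.ext
      intro j
      exact gG_fF hkn π.2.2.2 (Finite.injective_iff_bijective.mp (fF_injective hkn π.1 π.2.2.2)) j
    · intro ρ
      apply Subtype.ext
      apply Equiv.ext
      intro i
      exact fF_gG hkn (Finite.injective_iff_bijective.mp (gG_injective hkn ρ.1)) i
  · intro π
    refine ⟨fun i hi => fF_cond hkn π.2.2.2 (Finite.injective_iff_bijective.mp (fF_injective hkn π.1 π.2.2.2)) hi, ?_⟩
    have hdr : dr π.1 = dr (Equiv.ofBijective (fF n k hkn π.1)
        (Finite.injective_iff_bijective.mp (fF_injective hkn π.1 π.2.2.2))) + (k - 1) :=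
      dr_eq hkn π.2.1 π.2.2.2 π.2.2.1 _
    have h2 : dr π.1 + k - 1 = dr (Equiv.ofBijective (fF n k hkn π.1)
        (Finite.injective_iff_bijective.mp (fF_injective hkn π.1 π.2.2.2))) + 2 * (k - 1) := by
      omega
    show (-1 : ℤ) ^ dr (Equiv.ofBijective (fF n k hkn π.1)
        (Finite.injective_iff_bijective.mp (fF_injective hkn π.1 π.2.2.2)))
      = (-1 : ℤ) ^ (dr π.1 + k - 1)
    rw [h2, pow_add, pow_mul]
    norm_num
end

section
/- Let ¹M_n^k denote the monotone permutations π ∈ S_n with start k and π(n) = 1. The map sending π to π̃ ∈ S_{n−1}, π̃(i) = π(i) − 1 for i = 1,…,n−1, is a bijection from ¹M_n^k onto M_{n−1}^{k−1}, and satisfies (−1)^{dr(π̃)} = (−1)^{dr(π)+n}. -/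
namespace MonoBijAux

lemma pos {n : ℕ} (π : Equiv.Perm (Fin (n+2))) (hπ : π (Fin.last (n+1)) = 0)
    (i : Fin (n+1)) : 1 ≤ (π i.castSucc).val := by
  by_contra h
  push_neg at h
  have h0 : π i.castSucc = 0 := Fin.ext (by simp only [Fin.val_zero]; omega)
  have h1 := π.injective (h0.trans hπ.symm)
  have h2 : i.castSucc.val = n + 1 := by rw [h1]; rfl
  rw [Fin.coe_castSucc] at h2
  have := i.isLt
  omega

noncomputable def shrink {n : ℕ} (π : Equiv.Perm (Fin (n+2))) (hπ : π (Fin.last (n+1)) = 0) :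
    Equiv.Perm (Fin (n+1)) :=
  Equiv.ofBijective
    (fun i => ⟨(π i.castSucc).val - 1, by have := (π i.castSucc).isLt; omega⟩)
    (Finite.injective_iff_bijective.mp (by
      intro a b hab
      have ha := pos π hπ a
      have hb := pos π hπ b
      have hv : (π a.castSucc).val = (π b.castSucc).val := by
        have := congrArg Fin.val hab
        simp only at this
        omega
      have := π.injective (Fin.ext hv)
      exact Fin.castSucc_injective _ this))

lemma shrink_val {n : ℕ} (π : Equiv.Perm (Fin (n+2))) (hπ : π (Fin.last (n+1)) = 0)
    (i : Fin (n+1)) : (shrink π hπ i).val = (π i.castSucc).val - 1 := rfl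

lemma shrink_mono {n : ℕ} (π : Equiv.Perm (Fin (n+2))) (hm : IsMonotonePerm π)
    (hπ : π (Fin.last (n+1)) = 0) : IsMonotonePerm (shrink π hπ) := by
  intro i
  rcases hm i.castSucc with h | h
  · left; intro j hj
    have hlt := h j.castSucc (by simpa using hj)
    rw [Fin.lt_def] at hlt ⊢
    rw [shrink_val, shrink_val]
    have := pos π hπ i; have := pos π hπ j
    omega
  · right; intro j hj
    have hlt := h j.castSucc (by simpa using hj)
    rw [Fin.lt_def] at hlt ⊢
    rw [shrink_val, shrink_val]
    have := pos π hπ i; have := pos π hπ j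
    omega

lemma dr_shrink {n : ℕ} (π : Equiv.Perm (Fin (n+2))) (hπ : π (Fin.last (n+1)) = 0) :
    dr π = dr (shrink π hπ) + (n + 2) := by
  unfold dr
  rw [Finset.sum_filter, Finset.sum_filter, Fin.sum_univ_castSucc]
  have hlast : (0 < (Fin.last (n+1)).val ∧
      ∀ j : Fin (n+2), j < Fin.last (n+1) → π (Fin.last (n+1)) < π j) := by
    refine ⟨by simp, fun j hj => ?_⟩
    rw [hπ]
    have hne : j ≠ Fin.last (n+1) := ne_of_lt hj
    have : π j ≠ 0 := by
      intro h0
      exact hne (π.injective (h0.trans hπ.symm))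
    exact Fin.pos_of_ne_zero this
  rw [if_pos hlast]
  have : ∀ i : Fin (n+1),
      (if (0 < (Fin.castSucc i).val ∧
          ∀ j : Fin (n+2), j < Fin.castSucc i → π (Fin.castSucc i) < π j)
        then ((Fin.castSucc i).val + 1) else 0)
      = (if (0 < i.val ∧ ∀ j : Fin (n+1), j < i → shrink π hπ i < shrink π hπ j)
        then (i.val + 1) else 0) := by
    intro i
    have hiff : (0 < (Fin.castSucc i).val ∧
        ∀ j : Fin (n+2), j < Fin.castSucc i → π (Fin.castSucc i) < π j)
        ↔ (0 < i.val ∧ ∀ j : Fin (n+1), j < i → shrink π hπ i < shrink π hπ j) := by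
      constructor
      · rintro ⟨h1, h2⟩
        refine ⟨by simpa using h1, fun j hj => ?_⟩
        have hlt := h2 j.castSucc (by simpa using hj)
        rw [Fin.lt_def] at hlt ⊢
        rw [shrink_val, shrink_val]
        have := pos π hπ i; have := pos π hπ j
        omega
      · rintro ⟨h1, h2⟩
        refine ⟨by simpa using h1, fun j hj => ?_⟩
        have hjl : j.val < n + 1 := by
          have := hj
          rw [Fin.lt_def, Fin.coe_castSucc] at this
          have := i.isLt
          omega
        have hjc : j = Fin.castSucc ⟨j.val, hjl⟩ := Fin.ext rfl
        have hlt := h2 ⟨j.val, hjl⟩ (by rw [Fin.lt_def] at hj ⊢; simpa using hj)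
        rw [Fin.lt_def, shrink_val, shrink_val] at hlt
        have := pos π hπ i; have := pos π hπ (⟨j.val, hjl⟩ : Fin (n+1))
        rw [hjc, Fin.lt_def]
        omega
    by_cases hc : (0 < i.val ∧ ∀ j : Fin (n+1), j < i → shrink π hπ i < shrink π hπ j)
    · rw [if_pos (hiff.mpr hc), if_pos hc, Fin.coe_castSucc]
    · rw [if_neg (fun h => hc (hiff.mp h)), if_neg hc]
  rw [Finset.sum_congr rfl (fun i _ => this i)]
  simp

noncomputable def expand {n : ℕ} (ρ : Equiv.Perm (Fin (n+1))) : Equiv.Perm (Fin (n+2)) :=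
  Equiv.ofBijective
    (fun i => if h : i = Fin.last (n+1) then 0 else (ρ (i.castPred h)).succ)
    (Finite.injective_iff_bijective.mp (by
      intro a b hab
      dsimp only at hab
      by_cases ha : a = Fin.last (n+1) <;> by_cases hb : b = Fin.last (n+1)
      · rw [ha, hb]
      · rw [dif_pos ha, dif_neg hb] at hab
        exact absurd hab.symm (Fin.succ_ne_zero _)
      · rw [dif_neg ha, dif_pos hb] at hab
        exact absurd hab (Fin.succ_ne_zero _)
      · rw [dif_neg ha, dif_neg hb] at hab
        have := ρ.injective (Fin.succ_injective _ hab)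
        have : a.castPred ha = b.castPred hb := this
        have := congrArg Fin.val this
        exact Fin.ext this))

lemma expand_last {n : ℕ} (ρ : Equiv.Perm (Fin (n+1))) :
    expand ρ (Fin.last (n+1)) = 0 := dif_pos rfl

lemma expand_castSucc {n : ℕ} (ρ : Equiv.Perm (Fin (n+1))) (i : Fin (n+1)) :
    expand ρ i.castSucc = (ρ i).succ := by
  show (if h : i.castSucc = Fin.last (n+1) then (0 : Fin (n+2))
        else (ρ (i.castSucc.castPred h)).succ) = (ρ i).succ
  rw [dif_neg (Fin.castSucc_lt_last i).ne, Fin.castPred_castSucc]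

lemma expand_mono {n : ℕ} (ρ : Equiv.Perm (Fin (n+1))) (hρ : IsMonotonePerm ρ) :
    IsMonotonePerm (expand ρ) := by
  intro i
  induction i using Fin.lastCases with
  | last =>
    right; intro j hj
    rw [expand_last, Fin.lt_def]
    have hj' : j ≠ Fin.last (n+1) := ne_of_lt hj
    have hjc : j = (j.castPred hj').castSucc := (Fin.castSucc_castPred j hj').symm
    rw [hjc, expand_castSucc]
    simp [Fin.val_succ]
  | cast i =>
    have key : ∀ j : Fin (n+2), j < i.castSucc →
        ∃ j' : Fin (n+1), j = j'.castSucc ∧ j' < i := by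
      intro j hj
      have hj' : j ≠ Fin.last (n+1) := by
        intro hE
        rw [hE] at hj
        exact absurd hj (not_lt.mpr (Fin.le_last _))
      refine ⟨j.castPred hj', (Fin.castSucc_castPred j hj').symm, ?_⟩
      rw [Fin.lt_def] at hj ⊢
      simpa using hj
    rcases hρ i with h | h
    · left; intro j hj
      obtain ⟨j', rfl, hj'⟩ := key j hj
      rw [expand_castSucc, expand_castSucc]
      exact Fin.succ_lt_succ_iff.mpr (h j' hj')
    · right; intro j hj
      obtain ⟨j', rfl, hj'⟩ := key j hj
      rw [expand_castSucc, expand_castSucc]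
      exact Fin.succ_lt_succ_iff.mpr (h j' hj')

lemma shrink_expand {n : ℕ} (ρ : Equiv.Perm (Fin (n+1))) :
    shrink (expand ρ) (expand_last ρ) = ρ := by
  apply Equiv.ext
  intro i
  apply Fin.ext
  rw [shrink_val, expand_castSucc, Fin.val_succ]
  omega

end MonoBijAux


/-- (Lemma 2, first half.) Let `¹M_n^k` (here `n` is `n + 2`, `2 ≤ k ≤ n + 2`, values
recorded 1-based via `(π i).val + 1`) be the monotone permutations with start `k` and
`π(n) = 1`. The map `π ↦ π̃`, `π̃(i) = π(i) - 1` for `i = 1, …, n - 1`, is a bijection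
from `¹M_n^k` onto `M_{n-1}^{k-1}`, and `(-1)^{dr(π̃)} = (-1)^{dr(π) + n}`. -/
theorem monotone_bij_last_is_one (n k : ℕ) (hk : 2 ≤ k) (hkn : k ≤ n + 2) :
    ∃ Φ : {π : Equiv.Perm (Fin (n + 2)) //
            IsMonotonePerm π ∧ (π 0).val + 1 = k ∧ π (Fin.last (n + 1)) = 0} →
          {ρ : Equiv.Perm (Fin (n + 1)) // IsMonotonePerm ρ ∧ (ρ 0).val + 2 = k},
      Function.Bijective Φ ∧
      ∀ π, (∀ i : Fin (n + 1), ((Φ π).1 i).val + 1 = (π.1 i.castSucc).val) ∧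
        (-1 : ℤ) ^ dr (Φ π).1 = (-1 : ℤ) ^ (dr π.1 + (n + 2)) := by
  classical
  open MonoBijAux in
  refine ⟨fun π => ⟨shrink π.1 π.2.2.2, shrink_mono π.1 π.2.1 π.2.2.2, ?_⟩, ⟨?_, ?_⟩, ?_⟩
  · -- start
    have h0 : (0 : Fin (n+1)).castSucc = (0 : Fin (n+2)) := Fin.castSucc_zero
    have hp := pos π.1 π.2.2.2 0
    rw [h0] at hp
    have hs := π.2.2.1
    rw [shrink_val, h0]
    omega
  · -- injective
    intro π π' h
    have hv : shrink π.1 π.2.2.2 = shrink π'.1 π'.2.2.2 := congrArg Subtype.val h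
    apply Subtype.ext
    apply Equiv.ext
    intro i
    induction i using Fin.lastCases with
    | last => rw [π.2.2.2, π'.2.2.2]
    | cast i =>
      have hvi : ((shrink π.1 π.2.2.2) i).val = ((shrink π'.1 π'.2.2.2) i).val := by
        rw [hv]
      rw [shrink_val, shrink_val] at hvi
      have := pos π.1 π.2.2.2 i
      have := pos π'.1 π'.2.2.2 i
      exact Fin.ext (by omega)
  · -- surjective
    rintro ⟨ρ, hm, hs⟩
    refine ⟨⟨expand ρ, expand_mono ρ hm, ?_, expand_last ρ⟩, ?_⟩
    · have h0 : (0 : Fin (n+1)).castSucc = (0 : Fin (n+2)) := Fin.castSucc_zero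
      rw [← h0, expand_castSucc, Fin.val_succ]
      omega
    · exact Subtype.ext (shrink_expand ρ)
  · -- formulas
    intro π
    constructor
    · intro i
      rw [shrink_val]
      have := pos π.1 π.2.2.2 i
      omega
    · have hdr := dr_shrink π.1 π.2.2.2
      rw [hdr, pow_add, pow_add, mul_assoc, ← pow_add, ← two_mul, pow_mul,
        neg_one_sq, one_pow, mul_one]
end

section
/- Let ⁿM_n^k denote the monotone permutations π ∈ S_n with start k and π(n) = n. The map sending π to its restriction π̃ ∈ S_{n−1}, π̃(i) = π(i) for i = 1,…,n−1, is a bijection from ⁿM_n^k onto M_{n−1}^{k}, and satisfies (−1)^{dr(π̃)} = (−1)^{dr(π)}. -/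
namespace MonoAux

variable {n : ℕ}

/-- Extend a permutation of `Fin (n+1)` to `Fin (n+2)` fixing the last element. -/
def ext1 (ρ : Equiv.Perm (Fin (n + 1))) : Equiv.Perm (Fin (n + 2)) :=
  finSuccEquivLast.symm.permCongr ρ.optionCongr

@[simp] lemma ext1_castSucc (ρ : Equiv.Perm (Fin (n + 1))) (i : Fin (n + 1)) :
    ext1 ρ i.castSucc = (ρ i).castSucc := by
  simp [ext1, Equiv.permCongr_apply]

@[simp] lemma ext1_last (ρ : Equiv.Perm (Fin (n + 1))) :
    ext1 ρ (Fin.last (n + 1)) = Fin.last (n + 1) := by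
  simp [ext1, Equiv.permCongr_apply]

lemma ne_last_of_castSucc {π : Equiv.Perm (Fin (n + 2))}
    (hπ : π (Fin.last (n + 1)) = Fin.last (n + 1)) (i : Fin (n + 1)) :
    π i.castSucc ≠ Fin.last (n + 1) := by
  intro h
  exact (Fin.castSucc_lt_last i).ne (π.injective (h.trans hπ.symm))

lemma symm_ne_last_of_castSucc {π : Equiv.Perm (Fin (n + 2))}
    (hπ : π (Fin.last (n + 1)) = Fin.last (n + 1)) (i : Fin (n + 1)) :
    π.symm i.castSucc ≠ Fin.last (n + 1) := by
  intro h
  have : (i.castSucc : Fin (n + 2)) = Fin.last (n + 1) := by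
    have := congrArg π h
    rwa [Equiv.apply_symm_apply, hπ] at this
  exact (Fin.castSucc_lt_last i).ne this

/-- Restrict a permutation fixing the last element. -/
def res (π : Equiv.Perm (Fin (n + 2)))
    (hπ : π (Fin.last (n + 1)) = Fin.last (n + 1)) : Equiv.Perm (Fin (n + 1)) where
  toFun i := (π i.castSucc).castPred (ne_last_of_castSucc hπ i)
  invFun i := (π.symm i.castSucc).castPred (symm_ne_last_of_castSucc hπ i)
  left_inv i := by
    apply Fin.castSucc_injective
    simp [Fin.castSucc_castPred]
  right_inv i := by
    apply Fin.castSucc_injective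
    simp [Fin.castSucc_castPred]

@[simp] lemma res_apply (π : Equiv.Perm (Fin (n + 2)))
    (hπ : π (Fin.last (n + 1)) = Fin.last (n + 1)) (i : Fin (n + 1)) :
    ((res π hπ) i).val = (π i.castSucc).val := rfl

lemma ext1_res (π : Equiv.Perm (Fin (n + 2)))
    (hπ : π (Fin.last (n + 1)) = Fin.last (n + 1)) : ext1 (res π hπ) = π := by
  ext x
  refine Fin.lastCases ?_ (fun i => ?_) x
  · simp [hπ]
  · have : (ext1 (res π hπ)) i.castSucc = ((res π hπ) i).castSucc := ext1_castSucc _ i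
    rw [this]
    exact congrArg Fin.val (Fin.castSucc_castPred _ (ne_last_of_castSucc hπ i))

lemma res_ext1 (ρ : Equiv.Perm (Fin (n + 1))) :
    res (ext1 ρ) (ext1_last ρ) = ρ := by
  ext i
  simp

lemma isMonotone_res {π : Equiv.Perm (Fin (n + 2))}
    (hπ : π (Fin.last (n + 1)) = Fin.last (n + 1)) (hm : IsMonotonePerm π) :
    IsMonotonePerm (res π hπ) := by
  intro i
  rcases hm i.castSucc with h | h
  · left
    intro j hj
    have h2 := h j.castSucc (Fin.castSucc_lt_castSucc_iff.mpr hj)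
    rw [Fin.lt_def] at h2 ⊢
    exact h2
  · right
    intro j hj
    have h2 := h j.castSucc (Fin.castSucc_lt_castSucc_iff.mpr hj)
    rw [Fin.lt_def] at h2 ⊢
    exact h2

lemma isMonotone_ext1 {ρ : Equiv.Perm (Fin (n + 1))} (hm : IsMonotonePerm ρ) :
    IsMonotonePerm (ext1 ρ) := by
  intro i
  refine Fin.lastCases ?_ (fun i' => ?_) i
  · left
    intro j hj
    have hj' : j ≠ Fin.last (n + 1) := Fin.ne_last_of_lt hj
    obtain ⟨j', rfl⟩ := Fin.exists_castSucc_eq.mpr hj'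
    rw [ext1_castSucc, ext1_last]
    exact Fin.castSucc_lt_last _
  · rcases hm i' with h | h
    · left
      intro j hj
      have hj' : j ≠ Fin.last (n + 1) :=
        Fin.ne_last_of_lt (hj.trans (Fin.castSucc_lt_last i'))
      obtain ⟨j', rfl⟩ := Fin.exists_castSucc_eq.mpr hj'
      rw [ext1_castSucc, ext1_castSucc]
      exact Fin.castSucc_lt_castSucc_iff.mpr
        (h j' (Fin.castSucc_lt_castSucc_iff.mp hj))
    · right
      intro j hj
      have hj' : j ≠ Fin.last (n + 1) :=
        Fin.ne_last_of_lt (hj.trans (Fin.castSucc_lt_last i'))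
      obtain ⟨j', rfl⟩ := Fin.exists_castSucc_eq.mpr hj'
      rw [ext1_castSucc, ext1_castSucc]
      exact Fin.castSucc_lt_castSucc_iff.mpr
        (h j' (Fin.castSucc_lt_castSucc_iff.mp hj))

open Classical in
lemma dr_ext1 (ρ : Equiv.Perm (Fin (n + 1))) : dr (ext1 ρ) = dr ρ := by
  classical
  unfold dr
  rw [Finset.sum_filter, Finset.sum_filter, Fin.sum_univ_castSucc]
  have hlast : ¬ (0 < (Fin.last (n + 1)).val ∧
      ∀ j : Fin (n + 2), j < Fin.last (n + 1) → ext1 ρ (Fin.last (n + 1)) < ext1 ρ j) := by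
    rintro ⟨-, h⟩
    have h0 : (0 : Fin (n + 2)) < Fin.last (n + 1) := by
      simp [Fin.lt_def]
    exact absurd (h 0 h0) (by rw [ext1_last]; exact not_lt.mpr (Fin.le_last _))
  rw [if_neg hlast, add_zero]
  apply Finset.sum_congr rfl
  intro i _
  have hiff : (0 < (i.castSucc).val ∧
      ∀ j : Fin (n + 2), j < i.castSucc → ext1 ρ i.castSucc < ext1 ρ j) ↔
      (0 < i.val ∧ ∀ j : Fin (n + 1), j < i → ρ i < ρ j) := by
    constructor
    · rintro ⟨h0, h⟩
      refine ⟨by simpa using h0, fun j hj => ?_⟩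
      have := h j.castSucc (Fin.castSucc_lt_castSucc_iff.mpr hj)
      rw [ext1_castSucc, ext1_castSucc] at this
      exact Fin.castSucc_lt_castSucc_iff.mp this
    · rintro ⟨h0, h⟩
      refine ⟨by simpa using h0, fun j hj => ?_⟩
      have hj' : j ≠ Fin.last (n + 1) :=
        Fin.ne_last_of_lt (hj.trans (Fin.castSucc_lt_last i))
      obtain ⟨j', rfl⟩ := Fin.exists_castSucc_eq.mpr hj'
      rw [ext1_castSucc, ext1_castSucc]
      exact Fin.castSucc_lt_castSucc_iff.mpr (h j' (Fin.castSucc_lt_castSucc_iff.mp hj))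
  rw [if_congr hiff (by simp : (i.castSucc.val + 1) = i.val + 1) rfl]

end MonoAux

/-- (Lemma 2, second half.) Let `ⁿM_n^k` (here `n` is `n + 2`, `1 ≤ k ≤ n + 1`, values
recorded 1-based via `(π i).val + 1`) be the monotone permutations with start `k` and
`π(n) = n`. The restriction map `π ↦ π̃`, `π̃(i) = π(i)` for `i = 1, …, n - 1`, is a
bijection from `ⁿM_n^k` onto `M_{n-1}^{k}`, and `(-1)^{dr(π̃)} = (-1)^{dr(π)}`. -/
theorem monotone_bij_last_is_last (n k : ℕ) (hk : 1 ≤ k) (hkn : k ≤ n + 1) :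
    ∃ Φ : {π : Equiv.Perm (Fin (n + 2)) //
            IsMonotonePerm π ∧ (π 0).val + 1 = k ∧ π (Fin.last (n + 1)) = Fin.last (n + 1)} →
          {ρ : Equiv.Perm (Fin (n + 1)) // IsMonotonePerm ρ ∧ (ρ 0).val + 1 = k},
      Function.Bijective Φ ∧
      ∀ π, (∀ i : Fin (n + 1), ((Φ π).1 i).val = (π.1 i.castSucc).val) ∧
        (-1 : ℤ) ^ dr (Φ π).1 = (-1 : ℤ) ^ dr π.1 := by
  classical
  refine ⟨fun π => ⟨MonoAux.res π.1 π.2.2.2, MonoAux.isMonotone_res π.2.2.2 π.2.1, ?_⟩,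
    ?_, ?_⟩
  · have : ((MonoAux.res π.1 π.2.2.2) 0).val = (π.1 0).val := by
      have h0 : ((0 : Fin (n + 1)).castSucc : Fin (n + 2)) = 0 := rfl
      rw [MonoAux.res_apply, h0]
    rw [this]; exact π.2.2.1
  · constructor
    · intro π₁ π₂ h
      apply Subtype.ext
      have h' : MonoAux.res π₁.1 π₁.2.2.2 = MonoAux.res π₂.1 π₂.2.2.2 :=
        congrArg Subtype.val h
      have := congrArg MonoAux.ext1 h'
      rwa [MonoAux.ext1_res, MonoAux.ext1_res] at this
    · intro ρ
      refine ⟨⟨MonoAux.ext1 ρ.1, MonoAux.isMonotone_ext1 ρ.2.1, ?_, MonoAux.ext1_last ρ.1⟩, ?_⟩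
      · have h0 : (MonoAux.ext1 ρ.1) 0 = ((ρ.1 0).castSucc : Fin (n + 2)) := by
          have : ((0 : Fin (n + 1)).castSucc : Fin (n + 2)) = 0 := rfl
          rw [← this, MonoAux.ext1_castSucc]
        rw [h0, Fin.coe_castSucc]; exact ρ.2.2
      · apply Subtype.ext
        exact MonoAux.res_ext1 ρ.1
  · intro π
    refine ⟨fun i => MonoAux.res_apply π.1 π.2.2.2 i, ?_⟩
    have : dr π.1 = dr (MonoAux.res π.1 π.2.2.2) := by
      conv_lhs => rw [← MonoAux.ext1_res π.1 π.2.2.2]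
      exact MonoAux.dr_ext1 _
    rw [this]
end
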